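/- arXiv:math/9807189 — 2 statements merged into one kernel-verified Lean document; each statement's English description precedes it below -/
import Mathlib

section
/- Let G be a Lie group and let (Γ_n) be a sequence of discrete subgroups of G that converges geometrically to a closed subgroup Γ of G. Suppose that the identity component Γ₀ of Γ (the connected component of the identity in Γ with its subspace topology) is compact and nontrivial (contains more than one element). Then the sequence (Γ_n) has unbounded torsion: for every positive integer N there exist an index n and an element γ ∈ Γ_n of finite order strictly greater than N. -/
/-!
Suppose every torsion element of every `Γseq n` has order at most `N`. As `Γ₀` is compact, `1` has
a compact open neighbourhood `F` in `Γ`; write `F = Γ ∩ O` with `O` open in `G`, and pick an open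
`W ⊇ F` and an open `V ∋ 1` such that `W * V` lies in a compact subset `C` of `O`.

Since `x ↦ x ^ m` has derivative `m • id` at `1`, no element of a punctured neighbourhood of `1`
has order `m ≤ N`; as `Γ₀` is nontrivial, `1` is not isolated in `Γ`, so there is such an element
`t ∈ Γ ∩ V`. Its approximants `γ ∈ Γseq n` eventually lie in `V` and have no torsion of order
`≤ N`, hence infinite order, so their powers leave the compact set `C` inside the discrete group
`Γseq n`. The first power leaving `W` lies in `W * V ⊆ C`. A subsequential limit of these powers
lies in `Γ ∩ C ⊆ F ⊆ W` by geometric convergence, yet outside the open set `W`.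
-/

open Set Filter Topology Manifold Pointwise

theorem ChartedSpace.firstCountableTopology (H : Type*) [TopologicalSpace H]
    [FirstCountableTopology H] (M : Type*) [TopologicalSpace M] [ChartedSpace H M] :
    FirstCountableTopology M where
  nhds_generated_countable x := by
    rw [← (chartAt H x).symm_map_nhds_eq (mem_chart_source H x)]
    exact map.isCountablyGenerated _ _

section Connected

variable {X : Type*} [TopologicalSpace X]

theorem nhdsNE_neBot_of_nontrivial_connectedComponent [T1Space X] {x : X}
    (h : (connectedComponent x).Nontrivial) : (𝓝[≠] x).NeBot := by
  rw [neBot_iff, Ne, ← isOpen_singleton_iff_punctured_nhds]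
  exact fun hx => h.not_subset_singleton
    (IsClopen.connectedComponent_subset ⟨isClosed_singleton, hx⟩ (mem_singleton x))

theorem exists_isClopen_mem_subset_of_connectedComponent_subset [T2Space X] [CompactSpace X]
    {x : X} {U : Set X} (hU : IsOpen U) (h : connectedComponent x ⊆ U) :
    ∃ V, IsClopen V ∧ x ∈ V ∧ V ⊆ U := by
  let N := {s : Set X // IsClopen s ∧ x ∈ s}
  have : Nonempty N := ⟨⟨univ, isClopen_univ, mem_univ x⟩⟩
  have hdir : Directed (· ⊇ ·) fun s : N => (s : Set X) := fun s t =>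
    ⟨⟨s ∩ t, s.2.1.inter t.2.1, s.2.2, t.2.2⟩, inter_subset_left, inter_subset_right⟩
  rw [connectedComponent_eq_iInter_isClopen] at h
  obtain ⟨s, hsU⟩ := exists_subset_nhds_of_compactSpace hdir (fun s => s.2.1.1)
    fun y hy => hU.mem_nhds (h hy)
  exact ⟨s, s.2.1, s.2.2, hsU⟩

theorem exists_isCompact_isOpen_mem_of_isCompact_connectedComponent [T2Space X]
    [LocallyCompactSpace X] {x : X} (hc : IsCompact (connectedComponent x)) :
    ∃ F : Set X, IsCompact F ∧ IsOpen F ∧ x ∈ F := by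
  obtain ⟨L, hL, hcL, -⟩ := exists_compact_between hc isOpen_univ (subset_univ _)
  have : CompactSpace L := isCompact_iff_compactSpace.1 hL
  obtain ⟨V, hV, hxV, hVL⟩ := exists_isClopen_mem_subset_of_connectedComponent_subset
    (x := ⟨x, interior_subset (hcL mem_connectedComponent)⟩)
    (isOpen_interior.preimage continuous_subtype_val)
    fun z hz => hcL (continuous_subtype_val.image_connectedComponent_subset _ ⟨z, hz, rfl⟩)
  refine ⟨(↑) '' V, hV.isClosed.isCompact.image continuous_subtype_val,
    isOpen_iff_mem_nhds.2 ?_, ⟨_, hxV, rfl⟩⟩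
  rintro _ ⟨w, hw, rfl⟩
  rw [← nhdsWithin_eq_nhds.2 (mem_interior_iff_mem_nhds.1 (hVL hw)), ← map_nhds_subtype_val]
  exact image_mem_map (hV.isOpen.mem_nhds hw)

end Connected

section TopologicalGroup

variable {G : Type*} [TopologicalSpace G] [Group G] [IsTopologicalGroup G]

theorem IsCompact.exists_isOpen_mul_isOpen_subset_isCompact_subset [LocallyCompactSpace G]
    {K O : Set G} (hK : IsCompact K) (hO : IsOpen O) (hKO : K ⊆ O) :
    ∃ W, IsOpen W ∧ K ⊆ W ∧ ∃ V, IsOpen V ∧ (1 : G) ∈ V ∧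
      ∃ C, IsCompact C ∧ W * V ⊆ C ∧ C ⊆ O := by
  obtain ⟨L, hL, hKL, hLO⟩ := exists_compact_between hK hO hKO
  obtain ⟨V₁, hV₁, hLV₁⟩ := compact_open_separated_mul_right hL hO hLO
  obtain ⟨L', hL', hL'V₁, hL'c⟩ := local_compact_nhds hV₁
  exact ⟨interior L, isOpen_interior, hKL, interior L', isOpen_interior,
    mem_interior_iff_mem_nhds.2 hL', L * L', hL.mul hL'c,
    mul_subset_mul interior_subset interior_subset,
    (mul_subset_mul_left hL'V₁).trans hLV₁⟩

theorem Subgroup.exists_isOpen_mul_subset_isCompact_of_isCompact_connectedComponent [T2Space G]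
    [LocallyCompactSpace G] {Γ : Subgroup G} (hΓ : IsClosed (Γ : Set G))
    (hc : IsCompact (connectedComponent (1 : Γ))) :
    ∃ W V C : Set G, IsOpen W ∧ (1 : G) ∈ W ∧ IsOpen V ∧ (1 : G) ∈ V ∧ IsCompact C ∧
      W * V ⊆ C ∧ (Γ : Set G) ∩ C ⊆ W := by
  have := hΓ.locallyCompactSpace
  obtain ⟨F, hFc, hFo, hF1⟩ := exists_isCompact_isOpen_mem_of_isCompact_connectedComponent hc
  obtain ⟨O, hO, rfl⟩ := isOpen_induced_iff.1 hFo
  obtain ⟨W, hW, hFW, V, hV, hV1, C, hC, hWVC, hCO⟩ :=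
    (hFc.image continuous_subtype_val).exists_isOpen_mul_isOpen_subset_isCompact_subset hO
      (image_preimage_subset _ _)
  exact ⟨W, V, C, hW, hFW ⟨1, hF1, rfl⟩, hV, hV1, hC, hWVC,
    fun δ ⟨hδΓ, hδC⟩ => hFW ⟨⟨δ, hδΓ⟩, hCO hδC, rfl⟩⟩

theorem Subgroup.tendsto_pow_cocompact_of_not_isOfFinOrder [T2Space G] {H : Subgroup G}
    [DiscreteTopology H] {γ : G} (hγH : γ ∈ H) (hγ : ¬IsOfFinOrder γ) :
    Tendsto (γ ^ · : ℕ → G) atTop (cocompact G) := by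
  have hinj : Function.Injective fun k : ℕ => (⟨γ ^ k, pow_mem hγH k⟩ : H) := fun a b hab =>
    injective_pow_iff_not_isOfFinOrder.2 hγ (congrArg Subtype.val hab)
  exact (H.tendsto_coe_cofinite_of_discrete (isDiscrete_iff_discreteTopology.2 ‹_›)).comp
    (hinj.tendsto_cofinite.mono_left Nat.cofinite_eq_atTop.ge)

end TopologicalGroup

theorem exists_pow_mem_and_pow_succ_notMem {M : Type*} [Monoid M] {W : Set M} {γ : M}
    (h1 : 1 ∈ W) (h : ∃ k, γ ^ k ∉ W) : ∃ k, γ ^ k ∈ W ∧ γ ^ (k + 1) ∉ W := by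
  classical
  rcases hk : Nat.find h with _ | k
  · exact absurd (pow_zero γ ▸ h1) (hk ▸ Nat.find_spec h)
  · exact ⟨k, not_not.1 (Nat.find_min h (hk ▸ k.lt_succ_self)), hk ▸ Nat.find_spec h⟩

theorem Subgroup.exists_pow_mem_diff_of_not_isOfFinOrder {G : Type*} [TopologicalSpace G]
    [Group G] [IsTopologicalGroup G] [T2Space G] {H : Subgroup G} [DiscreteTopology H] {γ : G}
    (hγH : γ ∈ H) (hγ : ¬IsOfFinOrder γ) {W V C : Set G} (hW1 : 1 ∈ W) (hV1 : 1 ∈ V)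
    (hγV : γ ∈ V) (hC : IsCompact C) (hWVC : W * V ⊆ C) : ∃ k, γ ^ k ∈ C \ W := by
  have hescape : ∃ k, γ ^ k ∉ W :=
    (((H.tendsto_pow_cocompact_of_not_isOfFinOrder hγH hγ).eventually hC.compl_mem_cocompact).mono
      fun _ hk hkW => hk (hWVC (subset_mul_left W hV1 hkW))).exists
  obtain ⟨k, hk, hk1⟩ := exists_pow_mem_and_pow_succ_notMem hW1 hescape
  exact ⟨k + 1, hWVC (pow_succ γ k ▸ mul_mem_mul hk hγV), hk1⟩

theorem inter_nonempty_of_frequently_inter_nonempty {G : Type*} [TopologicalSpace G]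
    [FirstCountableTopology G] {Γseq : ℕ → Set G} {Γ : Set G}
    (hlim : ∀ nk : ℕ → ℕ, StrictMono nk → ∀ γk : ℕ → G, (∀ j, γk j ∈ Γseq (nk j)) →
      ∀ γ : G, Tendsto γk atTop (𝓝 γ) → γ ∈ Γ)
    {K : Set G} (hK : IsCompact K) (h : ∃ᶠ n in atTop, (Γseq n ∩ K).Nonempty) :
    (Γ ∩ K).Nonempty := by
  obtain ⟨nk, hnk, hne⟩ := extraction_of_frequently_atTop h
  choose δ hδΓ hδK using hne
  obtain ⟨γ, hγK, ψ, hψ, hlimψ⟩ := hK.tendsto_subseq hδK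
  exact ⟨γ, hlim (nk ∘ ψ) (hnk.comp hψ) (δ ∘ ψ) (fun j => hδΓ (ψ j)) γ hlimψ, hγK⟩

section LieGroup

variable {E : Type*} [NormedAddCommGroup E] [NormedSpace ℝ E]
    {G : Type*} [TopologicalSpace G] [ChartedSpace E G] [Group G]
    [LieGroup 𝓘(ℝ, E) 1 G]

theorem hasMFDerivAt_mul_one_one :
    HasMFDerivAt (𝓘(ℝ, E).prod 𝓘(ℝ, E)) 𝓘(ℝ, E) (fun p : G × G => p.1 * p.2) (1, 1)
      (ContinuousLinearMap.fst ℝ E E + ContinuousLinearMap.snd ℝ E E) := by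
  obtain ⟨D, hD⟩ : ∃ D : E × E →L[ℝ] E, HasMFDerivAt (𝓘(ℝ, E).prod 𝓘(ℝ, E)) 𝓘(ℝ, E)
      (fun p : G × G => p.1 * p.2) (1, 1) D :=
    ⟨_, ((contMDiff_mul 𝓘(ℝ, E) 1).mdifferentiableAt one_ne_zero).hasMFDerivAt⟩
  have hinl : D ∘L ContinuousLinearMap.inl ℝ E E = ContinuousLinearMap.id ℝ E := by
    have h : HasMFDerivAt 𝓘(ℝ, E) 𝓘(ℝ, E) (fun a : G => a * 1) 1 _ :=
      hD.comp (f := fun a : G => (a, (1 : G))) 1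
        ((hasMFDerivAt_id (1 : G)).prodMk (hasMFDerivAt_const (1 : G) (1 : G)))
    exact h.mfderiv.symm.trans ((hasMFDerivAt_id (1 : G)).congr_of_eventuallyEq
      (.of_forall mul_one)).mfderiv
  have hinr : D ∘L ContinuousLinearMap.inr ℝ E E = ContinuousLinearMap.id ℝ E := by
    have h : HasMFDerivAt 𝓘(ℝ, E) 𝓘(ℝ, E) (fun b : G => 1 * b) 1 _ :=
      hD.comp (f := fun b : G => ((1 : G), b)) 1
        ((hasMFDerivAt_const (1 : G) (1 : G)).prodMk (hasMFDerivAt_id (1 : G)))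
    exact h.mfderiv.symm.trans ((hasMFDerivAt_id (1 : G)).congr_of_eventuallyEq
      (.of_forall one_mul)).mfderiv
  refine hD.congr_mfderiv (ContinuousLinearMap.ext fun ⟨u, v⟩ => ?_)
  have h : D (u, 0) + D (0, v) = u + v := congr($hinl u + $hinr v)
  rw [← map_add, Prod.mk_add_mk, add_zero, zero_add] at h
  exact h

theorem hasMFDerivAt_pow_one (k : ℕ) :
    HasMFDerivAt 𝓘(ℝ, E) 𝓘(ℝ, E) (fun x : G => x ^ k) 1
      ((k : ℝ) • ContinuousLinearMap.id ℝ E) := by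
  induction k with
  | zero =>
    refine ((hasMFDerivAt_const (I := 𝓘(ℝ, E)) (I' := 𝓘(ℝ, E)) (1 : G) (1 : G))
      |>.congr_of_eventuallyEq (.of_forall pow_zero)).congr_mfderiv ?_
    rw [Nat.cast_zero, zero_smul]
    rfl
  | succ k ih =>
    have hmul : HasMFDerivAt (𝓘(ℝ, E).prod 𝓘(ℝ, E)) 𝓘(ℝ, E) (fun p : G × G => p.1 * p.2)
        ((1 : G) ^ k, 1) (ContinuousLinearMap.fst ℝ E E + ContinuousLinearMap.snd ℝ E E) := by
      rw [one_pow]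
      exact hasMFDerivAt_mul_one_one
    have hpair := ih.prodMk (hasMFDerivAt_id (1 : G))
    refine ((hmul.comp (f := fun x : G => (x ^ k, x)) 1 hpair).congr_of_eventuallyEq
      (.of_forall fun x => pow_succ x k)).congr_mfderiv (ContinuousLinearMap.ext fun u => ?_)
    change (k : ℝ) • u + u = ((k + 1 : ℕ) : ℝ) • u
    rw [Nat.cast_succ, add_smul, one_smul]

end LieGroup

theorem LieGroup.eventually_pow_ne_one (E : Type*) [NormedAddCommGroup E] [NormedSpace ℝ E]
    {G : Type*} [TopologicalSpace G] [ChartedSpace E G] [Group G] [LieGroup 𝓘(ℝ, E) 1 G]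
    {m : ℕ} (hm : m ≠ 0) : ∀ᶠ x in 𝓝[≠] (1 : G), x ^ m ≠ 1 := by
  set φ := extChartAt 𝓘(ℝ, E) (1 : G)
  set f := writtenInExtChartAt 𝓘(ℝ, E) 𝓘(ℝ, E) (1 : G) (· ^ m)
  have hsource : φ.source ∈ 𝓝 1 := extChartAt_source_mem_nhds 1
  have hf : HasFDerivAt f ((m : ℝ) • ContinuousLinearMap.id ℝ E) (φ 1) := by
    have h := (hasMFDerivAt_pow_one (E := E) (G := G) m).2
    rw [ModelWithCorners.range_eq_univ] at h
    exact hasFDerivWithinAt_univ.1 h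
  have hanti : ∃ C, AntilipschitzWith C ((m : ℝ) • ContinuousLinearMap.id ℝ E) :=
    ⟨_, (ContinuousLinearEquiv.smulLeft (Units.mk0 (m : ℝ) (Nat.cast_ne_zero.2 hm)) :
      E ≃L[ℝ] E).antilipschitz⟩
  have hφ : Tendsto φ (𝓝[≠] 1) (𝓝[≠] (φ 1)) := by
    refine tendsto_nhdsWithin_of_tendsto_nhds_of_eventually_within _
      ((continuousAt_extChartAt 1).mono_left nhdsWithin_le_nhds) ?_
    filter_upwards [nhdsWithin_le_nhds hsource, self_mem_nhdsWithin] with x hx hx1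
    exact fun h => hx1 (φ.injOn hx (mem_extChartAt_source 1) h)
  filter_upwards [hφ.eventually (hf.eventually_ne hanti (c := f (φ 1))),
    nhdsWithin_le_nhds hsource] with x hx hxs hxm
  apply hx
  simp only [f, writtenInExtChartAt, Function.comp_apply, φ.left_inv hxs, φ, extChartAt_to_inv,
    hxm, one_pow]

theorem LieGroup.eventually_forall_pow_ne_one (E : Type*) [NormedAddCommGroup E]
    [NormedSpace ℝ E] {G : Type*} [TopologicalSpace G] [ChartedSpace E G] [Group G]
    [LieGroup 𝓘(ℝ, E) 1 G] (N : ℕ) : ∀ᶠ x in 𝓝[≠] (1 : G), ∀ m ∈ Finset.Icc 1 N, x ^ m ≠ 1 :=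
  (Finset.eventually_all _).2 fun _ hm =>
    eventually_pow_ne_one E (Nat.one_le_iff_ne_zero.1 (Finset.mem_Icc.1 hm).1)

theorem unbounded_torsion_of_compact_identity_component_general
    {E : Type*} [NormedAddCommGroup E] [NormedSpace ℝ E] [FiniteDimensional ℝ E]
    {G : Type*} [TopologicalSpace G] [ChartedSpace E G] [Group G]
    [LieGroup 𝓘(ℝ, E) (⊤ : ℕ∞) G]
    (Γseq : ℕ → Subgroup G)
    (hdisc : ∀ n, DiscreteTopology (Γseq n))
    (Γ : Subgroup G) (hclosed : IsClosed (Γ : Set G))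
    -- geometric convergence, condition (1)
    (hgeo₁ : ∀ nk : ℕ → ℕ, StrictMono nk → ∀ γk : ℕ → G,
      (∀ j, γk j ∈ Γseq (nk j)) → ∀ γ : G,
      Filter.Tendsto γk Filter.atTop (𝓝 γ) → γ ∈ Γ)
    -- geometric convergence, condition (2)
    (hgeo₂ : ∀ γ ∈ Γ, ∃ γs : ℕ → G, (∀ n, γs n ∈ Γseq n) ∧
      Filter.Tendsto γs Filter.atTop (𝓝 γ))
    -- the identity component of `Γ` (in the subspace topology) is compact and nontrivial
    (hcpt : IsCompact (connectedComponent (1 : ↥Γ)))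
    (hnontriv : (connectedComponent (1 : ↥Γ)).Nontrivial) :
    ∀ N : ℕ, 0 < N → ∃ n : ℕ, ∃ γ ∈ Γseq n, IsOfFinOrder γ ∧ N < orderOf γ := by
  intro N _
  by_contra! hbound
  have : LieGroup 𝓘(ℝ, E) 1 G := LieGroup.of_le (n := ((⊤ : ℕ∞) : WithTop ℕ∞)) (by simp)
  have : IsTopologicalGroup G := topologicalGroup_of_lieGroup 𝓘(ℝ, E) 1
  have := ChartedSpace.t1Space E G
  have := ChartedSpace.locallyCompactSpace E G
  have := ChartedSpace.firstCountableTopology E G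
  have := nhdsNE_neBot_of_nontrivial_connectedComponent hnontriv
  obtain ⟨W, V, C, hW, hW1, hV, hV1, hC, hWVC, hΓC⟩ :=
    Subgroup.exists_isOpen_mul_subset_isCompact_of_isCompact_connectedComponent hclosed hcpt
  have hval : Tendsto ((↑) : Γ → G) (𝓝[≠] 1) (𝓝[≠] 1) :=
    continuous_subtype_val.continuousWithinAt.tendsto_nhdsWithin
      fun _ h => Subtype.val_injective.ne h
  obtain ⟨t, htV, ht⟩ := (hval.eventually <|
    (eventually_nhdsWithin_of_eventually_nhds (hV.eventually_mem hV1)).and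
      (LieGroup.eventually_forall_pow_ne_one E N)).exists
  obtain ⟨γs, hγsΓ, hγs⟩ := hgeo₂ t t.2
  have hexit : ∀ᶠ n in atTop, ((Γseq n : Set G) ∩ (C \ W)).Nonempty := by
    filter_upwards [hγs.eventually (hV.mem_nhds htV), (Finset.eventually_all _).2 fun m hm =>
      (hγs.pow m).eventually_ne (ht m hm)] with n hnV hnpow
    have hinf : ¬IsOfFinOrder (γs n) := fun hfin => hnpow _
      (Finset.mem_Icc.2 ⟨hfin.orderOf_pos, hbound n _ (hγsΓ n) hfin⟩) (pow_orderOf_eq_one _)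
    have := hdisc n
    obtain ⟨k, hk⟩ := Subgroup.exists_pow_mem_diff_of_not_isOfFinOrder (hγsΓ n) hinf
      hW1 hV1 hnV hC hWVC
    exact ⟨_, pow_mem (hγsΓ n) k, hk⟩
  obtain ⟨δ, hδΓ, hδC, hδW⟩ :=
    inter_nonempty_of_frequently_inter_nonempty hgeo₁ (hC.diff hW) hexit.frequently
  exact hδW (hΓC ⟨hδΓ, hδC⟩)

theorem unbounded_torsion_of_compact_identity_component
    {E : Type*} [NormedAddCommGroup E] [NormedSpace ℝ E] [FiniteDimensional ℝ E]
    {G : Type*} [TopologicalSpace G] [ChartedSpace E G] [Group G]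
    [IsTopologicalGroup G] [LieGroup 𝓘(ℝ, E) (⊤ : ℕ∞) G]
    (Γseq : ℕ → Subgroup G)
    (hdisc : ∀ n, DiscreteTopology (Γseq n))
    (Γ : Subgroup G) (hclosed : IsClosed (Γ : Set G))
    -- geometric convergence, condition (1)
    (hgeo₁ : ∀ nk : ℕ → ℕ, StrictMono nk → ∀ γk : ℕ → G,
      (∀ j, γk j ∈ Γseq (nk j)) → ∀ γ : G,
      Filter.Tendsto γk Filter.atTop (𝓝 γ) → γ ∈ Γ)
    -- geometric convergence, condition (2)
    (hgeo₂ : ∀ γ ∈ Γ, ∃ γs : ℕ → G, (∀ n, γs n ∈ Γseq n) ∧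
      Filter.Tendsto γs Filter.atTop (𝓝 γ))
    -- the identity component of `Γ` (in the subspace topology) is compact and nontrivial
    (hcpt : IsCompact (connectedComponent (1 : ↥Γ)))
    (hnontriv : (connectedComponent (1 : ↥Γ)).Nontrivial) :
    ∀ N : ℕ, 0 < N → ∃ n : ℕ, ∃ γ ∈ Γseq n, IsOfFinOrder γ ∧ N < orderOf γ :=
  unbounded_torsion_of_compact_identity_component_general (E := E) Γseq hdisc Γ hclosed hgeo₁ hgeo₂
    hcpt hnontriv
end

section
/- Let p : Ñ → N be a covering map between topological manifolds, let B be a compact topological space, and let f : B → Ñ be a continuous map such that the composition p ∘ f : B → N is injective. Then there exists an open set U ⊆ Ñ containing f(B) such that the restriction of p to U is injective; consequently p maps U homeomorphically onto the open subset p(U) of N. -/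
/-!
A covering map is a local homeomorphism, hence locally injective. Since `Y` is Hausdorff, a
continuous locally injective map that is injective on a compact set `K` is injective on a whole
neighbourhood of `K`; apply this to `K = f(B)`. An injective local homeomorphism is an open
embedding, so `p` restricted to that open neighbourhood is a homeomorphism onto its open image.
-/

namespace IsLocalHomeomorph

variable {X Y : Type*} [TopologicalSpace X] [TopologicalSpace Y] {p : X → Y}

theorem exists_isOpen_superset_injOn [T2Space Y] (hp : IsLocalHomeomorph p) {K : Set X}
    (hK : IsCompact K) (hinj : Set.InjOn p K) :
    ∃ U : Set X, IsOpen U ∧ K ⊆ U ∧ Set.InjOn p U :=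
  hinj.exists_isOpen_superset hK (fun _ _ ↦ hp.continuous.continuousAt) fun x _ ↦
    let ⟨u, hu, hxu, hinj⟩ := hp.isLocallyInjective x
    ⟨u, hu.mem_nhds hxu, hinj⟩

theorem exists_homeomorph_image_of_injOn (hp : IsLocalHomeomorph p) {U : Set X}
    (hU : IsOpen U) (hinj : Set.InjOn p U) :
    ∃ e : U ≃ₜ (p '' U), ∀ x : U, (e x : Y) = p x := by
  have hrestrict : Topology.IsOpenEmbedding (U.domRestrict p) :=
    (hp.comp hU.isOpenEmbedding_subtypeVal.isLocalHomeomorph).isOpenEmbedding_of_injective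
      hinj.injective
  exact ⟨hrestrict.isEmbedding.toHomeomorph.trans (Homeomorph.setCongr (Set.range_domRestrict p U)),
    fun _ ↦ rfl⟩

end IsLocalHomeomorph

theorem covering_injective_on_neighborhood_of_compact_general
    {X Y : Type*} [TopologicalSpace X] [TopologicalSpace Y] [T2Space Y]
    (p : X → Y) (hp : IsCoveringMap p)
    {B : Type*} [TopologicalSpace B] [CompactSpace B]
    (f : B → X) (hf : Continuous f)
    (hinj : Function.Injective (p ∘ f)) :
    ∃ U : Set X, IsOpen U ∧ Set.range f ⊆ U ∧ Set.InjOn p U ∧ IsOpen (p '' U) ∧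
      ∃ e : U ≃ₜ (p '' U), ∀ x : U, (e x : Y) = p x := by
  have hlocal : IsLocalHomeomorph p := hp.isLocalHomeomorph
  obtain ⟨U, hU, hfU, hinjU⟩ :=
    hlocal.exists_isOpen_superset_injOn (isCompact_range hf) hinj.injOn_range
  exact ⟨U, hU, hfU, hinjU, hlocal.isOpenMap U hU,
    hlocal.exists_homeomorph_image_of_injOn hU hinjU⟩

theorem covering_injective_on_neighborhood_of_compact
    {E₁ E₂ : Type*} [NormedAddCommGroup E₁] [NormedSpace ℝ E₁] [FiniteDimensional ℝ E₁]
    [NormedAddCommGroup E₂] [NormedSpace ℝ E₂] [FiniteDimensional ℝ E₂]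
    {X Y : Type*} [TopologicalSpace X] [TopologicalSpace Y] [T2Space X] [T2Space Y]
    [ChartedSpace E₁ X] [ChartedSpace E₂ Y]
    (p : X → Y) (hp : IsCoveringMap p)
    {B : Type*} [TopologicalSpace B] [CompactSpace B]
    (f : B → X) (hf : Continuous f)
    (hinj : Function.Injective (p ∘ f)) :
    ∃ U : Set X, IsOpen U ∧ Set.range f ⊆ U ∧ Set.InjOn p U ∧ IsOpen (p '' U) ∧
      ∃ e : U ≃ₜ (p '' U), ∀ x : U, (e x : Y) = p x :=
  covering_injective_on_neighborhood_of_compact_general p hp f hf hinj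
end
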